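/- If C = (1, c₂, c₃, c₄, c₅, c₆) is canonical and the subsystem C' = (1, c₂, c₃, c₄, c₅) is noncanonical, then c₆ ≠ 2c₅ − c₄. -/

import Mathlib

/-!
Let `w` be the least counterexample of the five-coin system and `d = c 5 - c 4`, so that
`c 6 = c 5 + d`. Below `c 6` both systems agree, so `c 6 ≤ w`, and the Kozen–Zaks bound gives
`w < c 4 + c 5`. At `w + d` the greedy algorithm of the six coins takes `c 6` and then pays `w - c 5`
greedily, i.e. it costs exactly `grd 5 c w`; exchanging a `c 4` for a `c 5` in an optimal
representation of `w` would beat it. This, together with the usual exchange arguments at a minimal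
counterexample, shows that every coin of an optimal representation of `w` is `c 1`, `c 2` or `c 3`
and exceeds `w - c 4`.
Greedy optimality of the six coins on the sums `c 2 + c 5`, `c 3 + c 5` and `c 3 + c 4` then forces
the representation to use only `c 3`, with `c 2 = d + 1`, `c 3 = 2 d + 1` and `w = c 6`; in that
situation `2 * c 4` is not paid greedily with two coins.
-/

open Finset

/-- `x` is a representation of value `v` in the coin system `c 1, …, c n`. -/
def IsRepr (n : ℕ) (c : ℕ → ℕ) (v : ℕ) (x : ℕ → ℕ) : Prop :=
  ∑ i ∈ Finset.Icc 1 n, c i * x i = v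

/-- Minimum number of coins over all representations of `v`. -/
noncomputable def opt (n : ℕ) (c : ℕ → ℕ) (v : ℕ) : ℕ :=
  sInf {k | ∃ x : ℕ → ℕ, IsRepr n c v x ∧ ∑ i ∈ Finset.Icc 1 n, x i = k}

/-- Number of coins used by the greedy algorithm to pay `v`. -/
def grd (n : ℕ) (c : ℕ → ℕ) (v : ℕ) : ℕ :=
  if hv : v = 0 then 0
  else
    let m := ((Finset.Icc 1 n).filter (fun i => c i ≤ v)).sup c
    if hm : 0 < m then grd n c (v - m) + 1 else 0
termination_by v
decreasing_by omega

/-- The system is canonical: greedy is optimal for every positive value. -/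
def Canonical (n : ℕ) (c : ℕ → ℕ) : Prop :=
  ∀ v, 0 < v → opt n c v = grd n c v

/-- `w` is a counterexample to the system. -/
def IsCex (n : ℕ) (c : ℕ → ℕ) (w : ℕ) : Prop :=
  0 < w ∧ opt n c w < grd n c w

/-- `w` is the minimum counterexample to the system. -/
def MinCex (n : ℕ) (c : ℕ → ℕ) (w : ℕ) : Prop :=
  IsCex n c w ∧ ∀ u, IsCex n c u → w ≤ u

/-- A (currency) system: first coin is `1` and coins strictly increase. -/
def IsSystem (n : ℕ) (c : ℕ → ℕ) : Prop :=
  c 1 = 1 ∧ StrictMonoOn c (Set.Icc 1 n)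

section Representations

variable {n : ℕ} {c : ℕ → ℕ}

theorem IsRepr.add {a b : ℕ} {x y : ℕ → ℕ} (hx : IsRepr n c a x) (hy : IsRepr n c b y) :
    IsRepr n c (a + b) (x + y) := by
  unfold IsRepr at *
  simp only [Pi.add_apply, mul_add, sum_add_distrib, hx, hy]

theorem isRepr_single {j : ℕ} (hj : j ∈ Icc 1 n) (m : ℕ) :
    IsRepr n c (c j * m) (Pi.single j m) := by
  unfold IsRepr
  simp [Pi.single_apply, hj]

theorem sum_Icc_single {j : ℕ} (hj : j ∈ Icc 1 n) (m : ℕ) :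
    ∑ i ∈ Icc 1 n, (Pi.single j m : ℕ → ℕ) i = m := by
  simp [hj]

theorem IsRepr.eq_mul_of_support {v j : ℕ} {x : ℕ → ℕ} (hx : IsRepr n c v x)
    (hj : j ∈ Icc 1 n) (hsupp : ∀ i ∈ Icc 1 n, x i ≠ 0 → i = j) :
    v = c j * x j ∧ ∑ i ∈ Icc 1 n, x i = x j := by
  have hzero : ∀ i ∈ Icc 1 n, i ≠ j → x i = 0 := fun i hi hij =>
    by_contra fun h => hij (hsupp i hi h)
  refine ⟨?_, sum_eq_single_of_mem j hj hzero⟩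
  rw [← hx]
  exact sum_eq_single_of_mem j hj fun i hi hij => by rw [hzero i hi hij, mul_zero]

theorem IsRepr.exists_ne_zero {v : ℕ} {x : ℕ → ℕ} (hx : IsRepr n c v x) (hv : 0 < v) :
    ∃ j ∈ Icc 1 n, x j ≠ 0 := by
  by_contra! h
  have : v = 0 := by rw [← hx]; exact sum_eq_zero fun i hi => by rw [h i hi, mul_zero]
  omega

theorem opt_le_sum {v : ℕ} {x : ℕ → ℕ} (hx : IsRepr n c v x) :
    opt n c v ≤ ∑ i ∈ Icc 1 n, x i :=
  Nat.sInf_le ⟨x, hx, rfl⟩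

theorem exists_isRepr_sum_eq_opt (h1 : c 1 = 1) (hn : 1 ≤ n) (v : ℕ) :
    ∃ x, IsRepr n c v x ∧ ∑ i ∈ Icc 1 n, x i = opt n c v := by
  have h1n : 1 ∈ Icc 1 n := mem_Icc.2 ⟨le_rfl, hn⟩
  have hrepr : IsRepr n c v (Pi.single 1 v) := by simpa [h1] using isRepr_single (c := c) h1n v
  exact Nat.sInf_mem (s := {k | ∃ x, IsRepr n c v x ∧ ∑ i ∈ Icc 1 n, x i = k})
    ⟨v, Pi.single 1 v, hrepr, sum_Icc_single h1n v⟩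

theorem opt_zero : opt n c 0 = 0 :=
  Nat.eq_zero_of_le_zero <| by simpa using opt_le_sum (n := n) (c := c) (x := 0) (by simp [IsRepr])

theorem opt_le_opt_sub_add_one (h1 : c 1 = 1) (hn : 1 ≤ n) {v j : ℕ} (hj : j ∈ Icc 1 n)
    (hjv : c j ≤ v) : opt n c v ≤ opt n c (v - c j) + 1 := by
  obtain ⟨x, hx, hsum⟩ := exists_isRepr_sum_eq_opt h1 hn (v - c j)
  have hrepr := hx.add (by simpa using isRepr_single hj 1)
  rw [Nat.sub_add_cancel hjv] at hrepr
  simpa [sum_add_distrib, hsum, sum_Icc_single hj] using opt_le_sum hrepr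

theorem opt_sub_add_one_le {v j : ℕ} {x : ℕ → ℕ} (hx : IsRepr n c v x)
    (hsum : ∑ i ∈ Icc 1 n, x i = opt n c v) (hj : j ∈ Icc 1 n) (hxj : x j ≠ 0) :
    c j ≤ v ∧ opt n c (v - c j) + 1 ≤ opt n c v := by
  set y := Function.update x j (x j - 1)
  have hxy : x = y + Pi.single j 1 := by
    ext i
    by_cases hij : i = j
    · subst hij
      simp only [y, Pi.add_apply, Function.update_self, Pi.single_eq_same]
      omega
    · simp [y, hij]
  have hy : IsRepr n c (∑ i ∈ Icc 1 n, c i * y i) y := rfl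
  have hv : v = ∑ i ∈ Icc 1 n, c i * y i + c j := by
    have := hy.add (by simpa using isRepr_single (c := c) hj 1)
    rw [← hxy] at this
    exact hx.symm.trans this
  have hcount : ∑ i ∈ Icc 1 n, x i = ∑ i ∈ Icc 1 n, y i + 1 := by
    conv_lhs => rw [hxy]
    simp only [Pi.add_apply, sum_add_distrib, sum_Icc_single hj]
  refine ⟨by omega, ?_⟩
  have := opt_le_sum hy
  rw [show v - c j = ∑ i ∈ Icc 1 n, c i * y i by omega]
  omega

end Representations

/-- The coin the greedy algorithm takes first when paying `v` (`0` if no coin fits). -/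
def largestCoin (n : ℕ) (c : ℕ → ℕ) (v : ℕ) : ℕ :=
  ((Icc 1 n).filter (fun i => c i ≤ v)).sup c

section Greedy

variable {n : ℕ} {c : ℕ → ℕ}

theorem largestCoin_le (v : ℕ) : largestCoin n c v ≤ v :=
  Finset.sup_le fun _ hi => (mem_filter.1 hi).2

theorem le_largestCoin {v j : ℕ} (hj : j ∈ Icc 1 n) (hjv : c j ≤ v) : c j ≤ largestCoin n c v :=
  le_sup (f := c) (mem_filter.2 ⟨hj, hjv⟩)

theorem exists_eq_largestCoin (h1 : c 1 = 1) (hn : 1 ≤ n) {v : ℕ} (hv : 0 < v) :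
    ∃ j ∈ Icc 1 n, c j = largestCoin n c v := by
  obtain ⟨j, hj, hjeq⟩ := exists_mem_eq_sup ((Icc 1 n).filter (fun i => c i ≤ v))
    ⟨1, mem_filter.2 ⟨mem_Icc.2 ⟨le_rfl, hn⟩, by omega⟩⟩ c
  exact ⟨j, (mem_filter.1 hj).1, hjeq.symm⟩

theorem one_le_largestCoin (h1 : c 1 = 1) (hn : 1 ≤ n) {v : ℕ} (hv : 0 < v) :
    1 ≤ largestCoin n c v :=
  h1 ▸ le_largestCoin (mem_Icc.2 ⟨le_rfl, hn⟩) (by omega)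

theorem largestCoin_eq {v j : ℕ} (hj : j ∈ Icc 1 n) (hjv : c j ≤ v)
    (hmax : ∀ i ∈ Icc 1 n, c i ≤ v → c i ≤ c j) : largestCoin n c v = c j :=
  le_antisymm (Finset.sup_le fun i hi => hmax i (mem_filter.1 hi).1 (mem_filter.1 hi).2)
    (le_largestCoin hj hjv)

theorem largestCoin_eq_top (hc : MonotoneOn c (Set.Icc 1 n)) (hn : 1 ≤ n) {v : ℕ}
    (hv : c n ≤ v) : largestCoin n c v = c n :=
  largestCoin_eq (mem_Icc.2 ⟨hn, le_rfl⟩) hv fun i hi _ =>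
    hc (by simpa using hi) (by simp [hn]) (mem_Icc.1 hi).2

theorem largestCoin_eq_of_lt_succ (hc : MonotoneOn c (Set.Icc 1 n)) {v k : ℕ} (hk : 1 ≤ k)
    (hkn : k < n) (hkv : c k ≤ v) (hvk : v < c (k + 1)) : largestCoin n c v = c k := by
  refine largestCoin_eq (mem_Icc.2 ⟨hk, hkn.le⟩) hkv fun i hi hiv => ?_
  have hi' : i ∈ Set.Icc 1 n := by simpa using hi
  by_contra hlt
  have hki : k + 1 ≤ i := by
    by_contra h
    exact hlt (hc hi' ⟨hk, by omega⟩ (by omega))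
  have := hc ⟨by omega, by omega⟩ hi' hki
  omega

theorem largestCoin_sub_eq {u v : ℕ} (h : largestCoin n c v ≤ v - u) :
    largestCoin n c (v - u) = largestCoin n c v :=
  le_antisymm (sup_mono fun i hi => by simp only [mem_filter] at hi ⊢; exact ⟨hi.1, by omega⟩)
    (Finset.sup_le fun _ hi =>
      le_sup (mem_filter.2 ⟨(mem_filter.1 hi).1, (le_sup hi).trans h⟩))

theorem grd_zero : grd n c 0 = 0 := by
  rw [grd]; rfl

theorem grd_of_ne_zero {v : ℕ} (hv : v ≠ 0) :
    grd n c v = if 0 < largestCoin n c v then grd n c (v - largestCoin n c v) + 1 else 0 := by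
  rw [grd]
  simp only [hv, largestCoin, dite_eq_ite, ↓reduceIte]
  rfl

theorem grd_eq_grd_sub_add_one (h1 : c 1 = 1) (hn : 1 ≤ n) {v : ℕ} (hv : 0 < v) :
    grd n c v = grd n c (v - largestCoin n c v) + 1 := by
  have := one_le_largestCoin h1 hn hv
  rw [grd_of_ne_zero hv.ne', if_pos (by omega)]

theorem grd_eq_grd_sub_top (hc : IsSystem n c) (hn : 1 ≤ n) {v : ℕ} (hv : c n ≤ v) :
    grd n c v = grd n c (v - c n) + 1 := by
  have hv0 : 0 < v := by
    have := hc.2.monotoneOn (Set.mem_Icc.2 ⟨le_rfl, hn⟩) (Set.mem_Icc.2 ⟨hn, le_rfl⟩) hn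
    rw [hc.1] at this; omega
  rw [grd_eq_grd_sub_add_one hc.1 hn hv0, largestCoin_eq_top hc.2.monotoneOn hn hv]

theorem grd_le_self (h1 : c 1 = 1) (hn : 1 ≤ n) (v : ℕ) : grd n c v ≤ v := by
  induction v using Nat.strong_induction_on with
  | _ v ih =>
    rcases Nat.eq_zero_or_pos v with rfl | hv
    · rw [grd_zero]
    · have hL := one_le_largestCoin h1 hn hv
      have := ih (v - largestCoin n c v) (by omega)
      rw [grd_eq_grd_sub_add_one h1 hn hv]
      omega

theorem exists_eq_of_grd_le_one (h1 : c 1 = 1) (hn : 1 ≤ n) {v : ℕ} (hv : 0 < v)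
    (h : grd n c v ≤ 1) : ∃ j ∈ Icc 1 n, c j = v := by
  rw [grd_eq_grd_sub_add_one h1 hn hv] at h
  have hrest : v - largestCoin n c v = 0 := by
    by_contra hne
    rw [grd_eq_grd_sub_add_one h1 hn (Nat.pos_of_ne_zero hne)] at h
    omega
  obtain ⟨j, hj, hjL⟩ := exists_eq_largestCoin h1 hn hv
  exact ⟨j, hj, by have := largestCoin_le (n := n) (c := c) v; omega⟩

theorem opt_le_grd (h1 : c 1 = 1) (hn : 1 ≤ n) (v : ℕ) : opt n c v ≤ grd n c v := by
  induction v using Nat.strong_induction_on with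
  | _ v ih =>
    rcases Nat.eq_zero_or_pos v with rfl | hv
    · rw [opt_zero]; exact Nat.zero_le _
    · obtain ⟨j, hj, hjL⟩ := exists_eq_largestCoin h1 hn hv
      have hL := one_le_largestCoin h1 hn hv
      calc opt n c v ≤ opt n c (v - c j) + 1 :=
            opt_le_opt_sub_add_one h1 hn hj (hjL ▸ largestCoin_le v)
        _ ≤ grd n c (v - c j) + 1 := by gcongr; exact ih _ (by omega)
        _ = grd n c v := by rw [hjL, grd_eq_grd_sub_add_one h1 hn hv]

theorem exists_eq_add_sub_largestCoin (h1 : c 1 = 1) (hn : 1 ≤ n) (hC : Canonical n c)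
    {i j : ℕ} (hi : i ∈ Icc 1 n) (hj : j ∈ Icc 1 n)
    (hlt : largestCoin n c (c i + c j) < c i + c j) :
    ∃ k ∈ Icc 1 n, c k = c i + c j - largestCoin n c (c i + c j) := by
  have hopt : opt n c (c i + c j) ≤ 2 := by
    have h₁ := opt_le_opt_sub_add_one h1 hn hj (Nat.le_add_left (c j) (c i))
    have h₂ := opt_le_opt_sub_add_one h1 hn hi (le_refl (c i))
    simp only [Nat.add_sub_cancel, Nat.sub_self, opt_zero] at h₁ h₂
    omega
  rw [hC _ (by omega), grd_eq_grd_sub_add_one h1 hn (by omega)] at hopt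
  exact exists_eq_of_grd_le_one h1 hn (by omega) (by omega)

end Greedy

section Extension

variable {n : ℕ} {c : ℕ → ℕ}

theorem sum_Icc_succ_of_eq_zero {f : ℕ → ℕ} (hf : f (n + 1) = 0) :
    ∑ i ∈ Icc 1 (n + 1), f i = ∑ i ∈ Icc 1 n, f i := by
  rw [sum_Icc_succ_top (by omega), hf, add_zero]

theorem isRepr_succ_iff {v : ℕ} {x : ℕ → ℕ} (hx : x (n + 1) = 0) :
    IsRepr (n + 1) c v x ↔ IsRepr n c v x := by
  unfold IsRepr
  rw [sum_Icc_succ_of_eq_zero (by simp [hx])]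

theorem opt_succ_le (h1 : c 1 = 1) (hn : 1 ≤ n) (v : ℕ) : opt (n + 1) c v ≤ opt n c v := by
  obtain ⟨x, hx, hsum⟩ := exists_isRepr_sum_eq_opt h1 hn v
  set y := Function.update x (n + 1) 0
  have hy : ∀ i ∈ Icc 1 n, y i = x i := fun i hi =>
    Function.update_of_ne (by have := mem_Icc.1 hi; omega) _ _
  have hyn : y (n + 1) = 0 := by simp [y]
  have hrepr : IsRepr (n + 1) c v y := by
    rw [isRepr_succ_iff hyn, IsRepr, sum_congr rfl fun i hi => by rw [hy i hi]]
    exact hx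
  calc opt (n + 1) c v ≤ ∑ i ∈ Icc 1 (n + 1), y i := opt_le_sum hrepr
    _ = opt n c v := by rw [sum_Icc_succ_of_eq_zero hyn, sum_congr rfl hy, hsum]

theorem opt_succ_of_lt (h1 : c 1 = 1) (hn : 1 ≤ n) {v : ℕ} (hv : v < c (n + 1)) :
    opt (n + 1) c v = opt n c v := by
  refine le_antisymm (opt_succ_le h1 hn v) ?_
  obtain ⟨x, hx, hsum⟩ := exists_isRepr_sum_eq_opt h1 (by omega : 1 ≤ n + 1) v
  have hxn : x (n + 1) = 0 := by
    by_contra h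
    have := (opt_sub_add_one_le hx hsum (mem_Icc.2 ⟨by omega, le_rfl⟩) h).1
    omega
  rw [← hsum, sum_Icc_succ_of_eq_zero hxn]
  exact opt_le_sum ((isRepr_succ_iff hxn).1 hx)

theorem largestCoin_succ_of_lt {v : ℕ} (hv : v < c (n + 1)) :
    largestCoin (n + 1) c v = largestCoin n c v := by
  unfold largestCoin
  rw [← insert_Icc_right_eq_Icc_add_one (by omega), filter_insert, if_neg (by omega)]

theorem grd_succ_of_lt {v : ℕ} (hv : v < c (n + 1)) : grd (n + 1) c v = grd n c v := by
  induction v using Nat.strong_induction_on with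
  | _ v ih =>
    rcases Nat.eq_zero_or_pos v with rfl | hv0
    · rw [grd_zero, grd_zero]
    · rw [grd_of_ne_zero hv0.ne', grd_of_ne_zero hv0.ne', largestCoin_succ_of_lt hv]
      split_ifs
      · rw [ih _ (by omega) (by omega)]
      · rfl

end Extension

section MinimalCounterexample

variable {n : ℕ} {c : ℕ → ℕ} {w : ℕ}

theorem IsSystem.of_le {m : ℕ} (hc : IsSystem n c) (hmn : m ≤ n) : IsSystem m c :=
  ⟨hc.1, hc.2.mono (Set.Icc_subset_Icc_right hmn)⟩

theorem IsSystem.one_le {j : ℕ} (hc : IsSystem n c) (hj : j ∈ Icc 1 n) : 1 ≤ c j := by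
  have hj' := mem_Icc.1 hj
  exact hc.1 ▸ hc.2.monotoneOn ⟨le_rfl, hj'.1.trans hj'.2⟩ ⟨hj'.1, hj'.2⟩ hj'.1

theorem exists_minCex (h1 : c 1 = 1) (hn : 1 ≤ n) (h : ¬ Canonical n c) :
    ∃ w, MinCex n c w := by
  classical
  have hex : ∃ v, IsCex n c v := by
    simp only [Canonical, not_forall] at h
    obtain ⟨v, hv, hne⟩ := h
    exact ⟨v, hv, lt_of_le_of_ne (opt_le_grd h1 hn v) hne⟩
  exact ⟨Nat.find hex, Nat.find_spec hex, fun u hu => Nat.find_min' hex hu⟩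

theorem MinCex.opt_eq_grd_of_lt (h1 : c 1 = 1) (hn : 1 ≤ n) (hw : MinCex n c w) {u : ℕ}
    (hu : u < w) : opt n c u = grd n c u := by
  rcases Nat.eq_zero_or_pos u with rfl | hu0
  · rw [opt_zero, grd_zero]
  · by_contra hne
    have := hw.2 u ⟨hu0, lt_of_le_of_ne (opt_le_grd h1 hn u) hne⟩
    omega

theorem MinCex.le_of_canonical_succ (h1 : c 1 = 1) (hn : 1 ≤ n) (hw : MinCex n c w)
    (hC : Canonical (n + 1) c) : c (n + 1) ≤ w := by
  by_contra! hlt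
  have := hC w hw.1.1
  rw [opt_succ_of_lt h1 hn hlt, grd_succ_of_lt hlt] at this
  exact hw.1.2.ne this

theorem MinCex.ne_largestCoin (h1 : c 1 = 1) (hn : 1 ≤ n) (hw : MinCex n c w) {j : ℕ}
    (hopt : opt n c (w - c j) + 1 ≤ opt n c w) : c j ≠ largestCoin n c w := by
  intro hj
  have hL := one_le_largestCoin h1 hn hw.1.1
  have hlt := hw.1.2
  have hw0 := hw.1.1
  have hrest := hw.opt_eq_grd_of_lt h1 hn (u := w - c j) (by omega)
  rw [grd_eq_grd_sub_add_one h1 hn hw.1.1, ← hj] at hlt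
  omega

theorem MinCex.lt_add_largestCoin (h1 : c 1 = 1) (hn : 1 ≤ n) (hw : MinCex n c w) {j : ℕ}
    (hj : j ∈ Icc 1 n) (hjw : c j ≤ w) (hopt : opt n c (w - c j) + 1 ≤ opt n c w) :
    w < c j + largestCoin n c w := by
  by_contra! hle
  set L := largestCoin n c w
  have hL := one_le_largestCoin h1 hn hw.1.1
  have hcj : 0 < c j := by
    by_contra h0
    rw [show c j = 0 by omega, Nat.sub_zero] at hopt
    omega
  have hLu : largestCoin n c (w - c j) = L := largestCoin_sub_eq (by omega)
  have h₁ : opt n c (w - c j) = opt n c (w - c j - L) + 1 := by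
    rw [hw.opt_eq_grd_of_lt h1 hn (by omega), grd_eq_grd_sub_add_one h1 hn (by omega), hLu,
      hw.opt_eq_grd_of_lt h1 hn (by omega)]
  have h₂ : opt n c (w - L) ≤ opt n c (w - L - c j) + 1 :=
    opt_le_opt_sub_add_one h1 hn hj (by omega)
  have h₃ : grd n c w = opt n c (w - L) + 1 := by
    rw [grd_eq_grd_sub_add_one h1 hn hw.1.1, hw.opt_eq_grd_of_lt h1 hn (by omega)]
  have := hw.1.2
  rw [show w - L - c j = w - c j - L by omega] at h₂
  omega

theorem MinCex.lt_add_last {m : ℕ} (hc : IsSystem (m + 1) c) (hw : MinCex (m + 1) c w) :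
    w < c m + c (m + 1) := by
  by_contra! hle
  obtain ⟨x, hx, hsum⟩ := exists_isRepr_sum_eq_opt (n := m + 1) hc.1 (by omega) w
  obtain ⟨j, hj, hxj⟩ := hx.exists_ne_zero hw.1.1
  obtain ⟨hjw, hopt⟩ := opt_sub_add_one_le hx hsum hj hxj
  have hL : largestCoin (m + 1) c w = c (m + 1) :=
    largestCoin_eq_top hc.2.monotoneOn (by omega) (by omega)
  have hne := hw.ne_largestCoin hc.1 (by omega) hopt
  have hlt := hw.lt_add_largestCoin hc.1 (by omega) hj hjw hopt
  rw [hL] at hne hlt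
  have hjm : j ≤ m := by
    rcases (mem_Icc.1 hj).2.lt_or_eq with h | rfl
    · omega
    · exact absurd rfl hne
  have := hc.2.monotoneOn ⟨(mem_Icc.1 hj).1, by omega⟩ ⟨(mem_Icc.1 hj).1.trans hjm, by omega⟩ hjm
  omega

end MinimalCounterexample

section SixCoins

variable {c : ℕ → ℕ} {w : ℕ}

theorem IsSystem.chain_six (hc : IsSystem 6 c) :
    c 1 = 1 ∧ c 1 < c 2 ∧ c 2 < c 3 ∧ c 3 < c 4 ∧ c 4 < c 5 ∧ c 5 < c 6 := by
  have hlt : ∀ i, 1 ≤ i → i < 6 → c i < c (i + 1) := fun i hi hi6 =>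
    hc.2 ⟨hi, by omega⟩ ⟨by omega, by omega⟩ (by omega)
  exact ⟨hc.1, hlt 1 le_rfl (by norm_num), hlt 2 (by norm_num) (by norm_num),
    hlt 3 (by norm_num) (by norm_num), hlt 4 (by norm_num) (by norm_num),
    hlt 5 (by norm_num) (by norm_num)⟩

theorem exists_coin_eq_add_sub_c6 (hc : IsSystem 6 c) (hC : Canonical 6 c) {i j : ℕ}
    (hi : i ∈ Icc 1 5) (hj : j ∈ Icc 1 5) (h : c 6 < c i + c j) :
    ∃ k ∈ Icc 1 5, c k = c i + c j - c 6 := by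
  have hsub : Icc 1 5 ⊆ Icc 1 6 := Icc_subset_Icc_right (by norm_num)
  have hL : largestCoin 6 c (c i + c j) = c 6 :=
    largestCoin_eq_top hc.2.monotoneOn (by norm_num) h.le
  obtain ⟨k, hk, hck⟩ :=
    exists_eq_add_sub_largestCoin hc.1 (by norm_num) hC (hsub hi) (hsub hj) (hL ▸ by omega)
  rw [hL] at hck
  have hc5 : c i ≤ c 5 ∧ c j ≤ c 5 := by
    simp only [mem_Icc] at hi hj
    exact ⟨hc.2.monotoneOn ⟨hi.1, by omega⟩ (by simp) hi.2,
      hc.2.monotoneOn ⟨hj.1, by omega⟩ (by simp) hj.2⟩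
  have h56 := hc.chain_six.2.2.2.2.2
  refine ⟨k, mem_Icc.2 ⟨(mem_Icc.1 hk).1, ?_⟩, hck⟩
  by_contra hk6
  rw [show k = 6 by have := mem_Icc.1 hk; omega] at hck
  omega

/-- Adding `c 5 - c 4` to `w`: the greedy algorithm of the six coins then pays `c 6` and is left
with `w - c 5`, so it pays `grd 5 c w`, whereas trading a `c 4` for a `c 5` costs nothing. -/
theorem opt_le_opt_sub_c4 (hc : IsSystem 6 c) (hC : Canonical 6 c)
    (hc6 : c 6 = 2 * c 5 - c 4) (hw : MinCex 5 c w) : opt 5 c w ≤ opt 5 c (w - c 4) := by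
  obtain ⟨h1, h12, h23, h34, h45, h56⟩ := hc.chain_six
  have hc5 : IsSystem 5 c := hc.of_le (by norm_num)
  have hw6 : c 6 ≤ w := hw.le_of_canonical_succ h1 (by norm_num) hC
  have hw45 : w < c 4 + c 5 := hw.lt_add_last hc5
  by_contra! hlt
  have hopt : opt 6 c (w + (c 5 - c 4)) ≤ opt 5 c (w - c 4) + 1 := calc
    opt 6 c (w + (c 5 - c 4)) ≤ opt 5 c (w + (c 5 - c 4)) := opt_succ_le h1 (by norm_num) _
    _ ≤ opt 5 c (w + (c 5 - c 4) - c 5) + 1 :=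
      opt_le_opt_sub_add_one h1 (by norm_num) (by simp) (by omega)
    _ = opt 5 c (w - c 4) + 1 := by rw [show w + (c 5 - c 4) - c 5 = w - c 4 by omega]
  have hgrd : grd 6 c (w + (c 5 - c 4)) = grd 5 c w := by
    rw [grd_eq_grd_sub_top hc (by norm_num) (by omega),
      grd_eq_grd_sub_top hc5 (by norm_num) (by omega),
      show w + (c 5 - c 4) - c 6 = w - c 5 by omega,
      grd_succ_of_lt (n := 5) (by show w - c 5 < c 6; omega)]
  have := hw.1.2
  have := hC (w + (c 5 - c 4)) (by omega)
  omega

theorem le_three_and_lt_c4_add (hc : IsSystem 6 c) (hC : Canonical 6 c)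
    (hc6 : c 6 = 2 * c 5 - c 4) (hw : MinCex 5 c w) {j : ℕ} (hj : j ∈ Icc 1 5)
    (hjw : c j ≤ w) (hopt : opt 5 c (w - c j) + 1 ≤ opt 5 c w) :
    j ≤ 3 ∧ w < c 4 + c j := by
  obtain ⟨h1, h12, h23, h34, h45, h56⟩ := hc.chain_six
  have hc5 : IsSystem 5 c := hc.of_le (by norm_num)
  have hw6 : c 6 ≤ w := hw.le_of_canonical_succ h1 (by norm_num) hC
  have hcj := hc5.one_le hj
  have hL : largestCoin 5 c w = c 5 :=
    largestCoin_eq_top hc5.2.monotoneOn (by norm_num) (by omega)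
  have hc4 := opt_le_opt_sub_c4 hc hC hc6 hw
  have hj5 : j ≠ 5 := by
    rintro rfl
    exact hw.ne_largestCoin h1 (by norm_num) hopt hL.symm
  have hj4 : j ≠ 4 := by
    rintro rfl
    omega
  have hwj : w < c j + c 5 := hL ▸ hw.lt_add_largestCoin h1 (by norm_num) hj hjw hopt
  refine ⟨by simp only [mem_Icc] at hj; omega, ?_⟩
  by_contra! hle
  have hL4 : largestCoin 5 c (w - c j) = c 4 :=
    largestCoin_eq_of_lt_succ hc5.2.monotoneOn (by norm_num) (by norm_num) (by omega)
      (by show w - c j < c 5; omega)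
  have h₁ : opt 5 c (w - c j) = opt 5 c (w - c j - c 4) + 1 := by
    rw [hw.opt_eq_grd_of_lt h1 (by norm_num) (by omega),
      grd_eq_grd_sub_add_one h1 (by norm_num) (by omega), hL4,
      hw.opt_eq_grd_of_lt h1 (by norm_num) (by omega)]
  have h₂ : opt 5 c (w - c 4) ≤ opt 5 c (w - c 4 - c j) + 1 :=
    opt_le_opt_sub_add_one h1 (by norm_num) hj (by omega)
  rw [show w - c 4 - c j = w - c j - c 4 by omega] at h₂
  omega

theorem eq_three_of_opt_sub_add_one_le (hc : IsSystem 6 c) (hC : Canonical 6 c)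
    (hc6 : c 6 = 2 * c 5 - c 4) (hw : MinCex 5 c w) {j : ℕ} (hj : j ∈ Icc 1 5)
    (hjw : c j ≤ w) (hopt : opt 5 c (w - c j) + 1 ≤ opt 5 c w) :
    j = 3 ∧ w < c 4 + c 3 := by
  obtain ⟨hj3, hwj⟩ := le_three_and_lt_c4_add hc hC hc6 hw hj hjw hopt
  obtain ⟨h1, h12, h23, h34, h45, h56⟩ := hc.chain_six
  have hw6 : c 6 ≤ w := hw.le_of_canonical_succ h1 (by norm_num) hC
  simp only [mem_Icc] at hj
  obtain rfl | rfl | rfl : j = 1 ∨ j = 2 ∨ j = 3 := by omega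
  · omega
  · obtain ⟨k, hk, hck⟩ :=
      exists_coin_eq_add_sub_c6 hc hC (i := 2) (j := 5) (by simp) (by simp) (by omega)
    obtain ⟨hk1, hk5⟩ := mem_Icc.1 hk
    interval_cases k <;> omega
  · exact ⟨rfl, hwj⟩

theorem coins_of_lt_c4_add_c3 (hc : IsSystem 6 c) (hC : Canonical 6 c)
    (hc6 : c 6 = 2 * c 5 - c 4) (hw : MinCex 5 c w) (h : w < c 4 + c 3) :
    c 2 = c 5 - c 4 + 1 ∧ c 3 = 2 * (c 5 - c 4) + 1 ∧ w = c 6 := by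
  obtain ⟨h1, h12, h23, h34, h45, h56⟩ := hc.chain_six
  have hw6 : c 6 ≤ w := hw.le_of_canonical_succ h1 (by norm_num) hC
  obtain ⟨k, hk, hck⟩ :=
    exists_coin_eq_add_sub_c6 hc hC (i := 3) (j := 5) (by simp) (by simp) (by omega)
  have hc3 : c 3 = c 2 + (c 5 - c 4) := by
    obtain ⟨hk1, hk5⟩ := mem_Icc.1 hk
    interval_cases k <;> omega
  obtain ⟨k', hk', hck'⟩ :=
    exists_coin_eq_add_sub_c6 hc hC (i := 3) (j := 4) (by simp) (by simp) (by omega)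
  have hc2 : c 2 = c 5 - c 4 + 1 := by
    obtain ⟨hk'1, hk'5⟩ := mem_Icc.1 hk'
    interval_cases k' <;> omega
  omega

theorem opt_ne_of_eq_c3_mul (hc : IsSystem 6 c) (hC : Canonical 6 c)
    (hc6 : c 6 = 2 * c 5 - c 4) (hw : MinCex 5 c w) (h : w < c 4 + c 3) {k : ℕ}
    (hk : w = c 3 * k) : opt 5 c w ≠ k := by
  intro hopt
  obtain ⟨hc2, hc3, hwc6⟩ := coins_of_lt_c4_add_c3 hc hC hc6 hw h
  obtain ⟨h1, h12, h23, h34, h45, h56⟩ := hc.chain_six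
  have hc5 : IsSystem 5 c := hc.of_le (by norm_num)
  have hkd : k ≤ c 5 - c 4 := by
    have hlt := hw.1.2
    rw [grd_eq_grd_sub_top hc5 (by norm_num) (by omega)] at hlt
    have := grd_le_self h1 (by norm_num : 1 ≤ 5) (w - c 5)
    omega
  have hk2 : 2 ≤ k := by
    by_contra! hk2
    interval_cases k <;> omega
  have h2k : c 3 * 2 ≤ c 3 * k := Nat.mul_le_mul_left _ hk2
  obtain ⟨m, hm, hcm⟩ :=
    exists_coin_eq_add_sub_c6 hc hC (i := 4) (j := 4) (by simp) (by simp) (by omega)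
  obtain ⟨hm1, hm5⟩ := mem_Icc.1 hm
  obtain rfl | rfl | hk4 : k = 2 ∨ k = 3 ∨ 4 ≤ k := by omega
  · interval_cases m <;> omega
  · interval_cases m <;> omega
  · have : c 3 * 4 ≤ c 3 * k := Nat.mul_le_mul_left _ hk4
    interval_cases m <;> omega

end SixCoins

theorem c6_ne_two_c5_sub_c4 (c : ℕ → ℕ) (hsys : IsSystem 6 c)
    (hC : Canonical 6 c) (hC' : ¬ Canonical 5 c) :
    c 6 ≠ 2 * c 5 - c 4 := by
  intro hc6
  obtain ⟨w, hw⟩ := exists_minCex hsys.1 (by norm_num) hC'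
  obtain ⟨x, hx, hsum⟩ := exists_isRepr_sum_eq_opt (n := 5) hsys.1 (by norm_num) w
  have hused : ∀ j ∈ Icc 1 5, x j ≠ 0 → j = 3 ∧ w < c 4 + c 3 := fun j hj hxj =>
    have ⟨hjw, hopt⟩ := opt_sub_add_one_le hx hsum hj hxj
    eq_three_of_opt_sub_add_one_le hsys hC hc6 hw hj hjw hopt
  obtain ⟨j, hj, hxj⟩ := hx.exists_ne_zero hw.1.1
  obtain ⟨rfl, hlt⟩ := hused j hj hxj
  obtain ⟨hval, hcount⟩ := hx.eq_mul_of_support hj fun i hi hxi => (hused i hi hxi).1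
  exact opt_ne_of_eq_c3_mul hsys hC hc6 hw hlt hval (hsum ▸ hcount)
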